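/- Let $g(z)=e^{\frac{z+1}{z-1}}$ on the open unit disk $\mathbb{D}$, and fix $0<r<1$, so that $D=B(1-r;r)$ is an open disk contained in $\mathbb{D}$ and tangent to the unit circle at $1$. Then $\mathbb{D}\setminus D$ is a path divergence set for $g$ at $1$: for every path $\gamma$ in the disk from $-1$ to $1$ with $\gamma(s)\notin D$ for all $s\in(0,1)$, the limit $\lim_{s\to 1^-} g(\gamma(s))$ does not exist. -/

import Mathlib

/-!
The Cayley-type map `z ↦ (z + 1) / (z - 1)` sends the unit disk onto the left half-plane and the
complement of the tangent disk `B(1 - r; r)` into the vertical strip `-(1 - r) / r ≤ Re w ≤ 0`.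
Along the path, `w = (γ + 1) / (γ - 1)` therefore tends to infinity inside that strip, so `|Im w|`
tends to infinity, and by continuity `Im w` sweeps through whole periods of `cos` arbitrarily close
to `s = 1`. Hence `Re (exp w) = exp (Re w) cos (Im w)` is frequently `≥ exp (-(1 - r) / r)` and
frequently `≤ -exp (-(1 - r) / r)`, which rules out a limit.
-/

open Set Metric Filter Topology Bornology

theorem Complex.re_add_one_div_sub_one (z : ℂ) :
    ((z + 1) / (z - 1)).re = (‖z‖ ^ 2 - 1) / ‖z - 1‖ ^ 2 := by
  rw [Complex.div_re, Complex.sq_norm, Complex.sq_norm, ← add_div]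
  congr 1
  simp only [Complex.normSq_apply, Complex.add_re, Complex.sub_re, Complex.add_im,
    Complex.sub_im, Complex.one_re, Complex.one_im]
  ring

theorem Complex.re_add_one_div_sub_one_mem_Icc {r : ℝ} (hr : 0 < r) {z : ℂ}
    (hz : z ∈ ball 0 1) (hz' : z ∉ ball (1 - (r : ℂ)) r) :
    ((z + 1) / (z - 1)).re ∈ Icc (-((1 - r) / r)) 0 := by
  rw [mem_ball_zero_iff] at hz
  rw [mem_ball, not_lt, dist_eq_norm] at hz'
  have hz1 : 0 < ‖z - 1‖ := norm_pos_iff.2 (sub_ne_zero.2 (by rintro rfl; simp at hz))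
  have hsq : ∀ w : ℂ, ‖w‖ ^ 2 = w.re ^ 2 + w.im ^ 2 := fun w => by
    rw [Complex.sq_norm, Complex.normSq_apply]; ring
  have h1 := hsq z
  have h2 := hsq (z - 1)
  have h3 := hsq (z - (1 - r))
  simp only [Complex.sub_re, Complex.sub_im, Complex.one_re, Complex.one_im,
    Complex.ofReal_re, Complex.ofReal_im] at h2 h3
  rw [Complex.re_add_one_div_sub_one]
  constructor
  · -- `r (1 - ‖z‖²) ≤ (1 - r) ‖z - 1‖²` expands to `r² ≤ ‖z - (1 - r)‖²`.
    rw [← neg_div, div_le_div_iff₀ hr (by positivity)]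
    nlinarith [pow_le_pow_left₀ hr.le hz' 2]
  · exact div_nonpos_of_nonpos_of_nonneg (by nlinarith [norm_nonneg z]) (by positivity)

theorem tendsto_add_one_div_sub_one_cobounded :
    Tendsto (fun z : ℂ => (z + 1) / (z - 1)) (𝓝[≠] 1) (cobounded ℂ) := by
  rw [← tendsto_norm_atTop_iff_cobounded]
  have hnum : Tendsto (fun z : ℂ => ‖z + 1‖) (𝓝[≠] 1) (𝓝 2) :=
    ((continuous_norm.comp (continuous_add_const 1)).tendsto' 1 2 (by norm_num)).mono_left
      nhdsWithin_le_nhds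
  have hden : Tendsto (fun z : ℂ => z - 1) (𝓝[≠] 1) (𝓝[≠] 0) :=
    tendsto_nhdsWithin_iff.2 ⟨tendsto_nhdsWithin_of_tendsto_nhds
      (by simpa using (tendsto_id (x := 𝓝 (1 : ℂ))).sub_const 1),
      eventually_nhdsWithin_of_forall fun z hz => sub_ne_zero.2 hz⟩
  simpa [norm_div, div_eq_mul_inv] using
    hnum.pos_mul_atTop two_pos (tendsto_norm_inv_nhdsNE_zero_atTop.comp hden)

theorem exists_mem_Icc_cos_eq {v : ℝ → ℝ} {a b : ℝ} (hab : a ≤ b) (hv : ContinuousOn v (Icc a b))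
    (hvab : 2 * Real.pi ≤ |v b - v a|) (θ : ℝ) : ∃ s ∈ Icc a b, Real.cos (v s) = Real.cos θ := by
  set t := toIcoMod Real.two_pi_pos (min (v a) (v b)) θ
  have ht : t ∈ uIcc (v a) (v b) := by
    have := toIcoMod_mem_Ico Real.two_pi_pos (min (v a) (v b)) θ
    rw [← max_sub_min_eq_abs', max_comm, min_comm] at hvab
    exact ⟨this.1, by linarith [this.2]⟩
  obtain ⟨s, hs, hvs⟩ := intermediate_value_uIcc (by rwa [uIcc_of_le hab]) ht
  refine ⟨s, by rwa [uIcc_of_le hab] at hs, ?_⟩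
  rw [hvs, ← Real.Angle.cos_coe, Real.Angle.coe_toIcoMod, Real.Angle.cos_coe]

theorem frequently_cos_eq_of_tendsto_abs_atTop {v : ℝ → ℝ} {a b : ℝ} (hab : a < b)
    (hv : ContinuousOn v (Ioo a b)) (hlim : Tendsto (fun s => |v s|) (𝓝[<] b) atTop) (θ : ℝ) :
    ∃ᶠ s in 𝓝[<] b, Real.cos (v s) = Real.cos θ := by
  refine (nhdsLT_basis b).frequently_iff.2 fun a' ha' => ?_
  obtain ⟨s₀, hs₀, hs₀b⟩ := exists_between (max_lt hab ha')
  obtain ⟨s₁, hs₁, hs₀₁⟩ := ((hlim.eventually_ge_atTop (|v s₀| + 2 * Real.pi)).and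
    (Ioo_mem_nhdsLT hs₀b)).exists
  have hsub : Icc s₀ s₁ ⊆ Ioo (max a a') b := Icc_subset_Ioo hs₀ hs₀₁.2
  obtain ⟨s, hs, hcos⟩ := exists_mem_Icc_cos_eq hs₀₁.1.le
    (hv.mono (hsub.trans (Ioo_subset_Ioo_left (le_max_left a a'))))
    (by linarith [abs_sub_abs_le_abs_sub (v s₁) (v s₀)]) θ
  exact ⟨s, Ioo_subset_Ioo_left (le_max_right a a') (hsub hs), hcos⟩

theorem not_tendsto_exp_of_re_mem_Icc {w : ℝ → ℂ} {a b c d : ℝ} (hab : a < b)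
    (hw : ContinuousOn w (Ioo a b)) (hre : ∀ s ∈ Ioo a b, (w s).re ∈ Icc c d)
    (hlim : Tendsto w (𝓝[<] b) (cobounded ℂ)) (L : ℂ) :
    ¬ Tendsto (fun s => Complex.exp (w s)) (𝓝[<] b) (𝓝 L) := by
  intro hL
  have hre' : ∀ᶠ s in 𝓝[<] b, (w s).re ∈ Icc c d := eventually_of_mem (Ioo_mem_nhdsLT hab) hre
  have him : Tendsto (fun s => |(w s).im|) (𝓝[<] b) atTop := by
    refine tendsto_atTop_mono' _ ?_
      ((tendsto_norm_atTop_iff_cobounded.2 hlim).atTop_add (tendsto_const_nhds (x := -max |c| |d|)))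
    filter_upwards [hre'] with s hs
    have := Complex.norm_le_abs_re_add_abs_im (w s)
    have : |(w s).re| ≤ max |c| |d| := abs_le_max_abs_abs hs.1 hs.2
    linarith
  have hv := Complex.continuous_im.comp_continuousOn hw
  have hpos : Real.exp c ≤ L.re := by
    refine (isClosed_le continuous_const Complex.continuous_re).mem_of_frequently_of_tendsto ?_ hL
    refine ((frequently_cos_eq_of_tendsto_abs_atTop hab hv him 0).and_eventually hre').mono ?_
    rintro s ⟨hcos, hs⟩
    have hcos : Real.cos (w s).im = 1 := by simpa using hcos
    simpa [Complex.exp_re, hcos] using hs.1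
  have hneg : L.re ≤ -Real.exp c := by
    refine (isClosed_le Complex.continuous_re continuous_const).mem_of_frequently_of_tendsto ?_ hL
    refine ((frequently_cos_eq_of_tendsto_abs_atTop hab hv him Real.pi).and_eventually hre').mono ?_
    rintro s ⟨hcos, hs⟩
    have hcos : Real.cos (w s).im = -1 := by simpa using hcos
    simpa [Complex.exp_re, hcos] using hs.1
  linarith [Real.exp_pos c]

theorem complement_of_tangent_disk_path_divergence_general
    (r : ℝ) (hr0 : 0 < r)
    (γ : ℝ → ℂ)
    (hγc : ContinuousOn γ (Icc 0 1)) (hγ1 : γ 1 = 1)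
    (hγD : ∀ s ∈ Ioo (0:ℝ) 1, γ s ∈ ball (0:ℂ) 1)
    (hγavoid : ∀ s ∈ Ioo (0:ℝ) 1, γ s ∉ ball (1 - (r:ℂ)) r) :
    ¬ ∃ L : ℂ, Tendsto (fun s => Complex.exp ((γ s + 1) / (γ s - 1)))
      (nhdsWithin 1 (Iio 1)) (nhds L) := by
  rintro ⟨L, hL⟩
  have hγne : ∀ s ∈ Ioo (0:ℝ) 1, γ s ≠ 1 := fun s hs h => by simpa [h] using hγD s hs
  have hγlim : Tendsto γ (𝓝[<] 1) (𝓝[≠] 1) := by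
    refine tendsto_nhdsWithin_iff.2 ⟨?_, eventually_of_mem (Ioo_mem_nhdsLT zero_lt_one) hγne⟩
    simpa [ContinuousWithinAt, hγ1] using
      (hγc 1 ⟨zero_le_one, le_rfl⟩).mono_of_mem_nhdsWithin (Icc_mem_nhdsLT zero_lt_one)
  have hγc' := hγc.mono Ioo_subset_Icc_self
  have hw : ContinuousOn (fun s => (γ s + 1) / (γ s - 1)) (Ioo 0 1) :=
    (hγc'.add continuousOn_const).div (hγc'.sub continuousOn_const)
      fun s hs => sub_ne_zero.2 (hγne s hs)
  exact not_tendsto_exp_of_re_mem_Icc zero_lt_one hw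
    (fun s hs => Complex.re_add_one_div_sub_one_mem_Icc hr0 (hγD s hs) (hγavoid s hs))
    (tendsto_add_one_div_sub_one_cobounded.comp hγlim) L hL

/-- For `g z = exp ((z+1)/(z-1))` and `0 < r < 1`, the complement in the
disk of the tangent disk `B(1-r; r)` is a path divergence set for `g` at `1`: along every
path `γ` in the disk from `-1` to `1` avoiding `B(1-r; r)`, `g (γ s)` has no limit as
`s → 1⁻`. -/
theorem complement_of_tangent_disk_path_divergence
    (r : ℝ) (hr0 : 0 < r) (hr1 : r < 1)
    (γ : ℝ → ℂ)
    (hγc : ContinuousOn γ (Icc 0 1)) (hγ0 : γ 0 = -1) (hγ1 : γ 1 = 1)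
    (hγD : ∀ s ∈ Ioo (0:ℝ) 1, γ s ∈ ball (0:ℂ) 1)
    (hγavoid : ∀ s ∈ Ioo (0:ℝ) 1, γ s ∉ ball (1 - (r:ℂ)) r) :
    ¬ ∃ L : ℂ, Tendsto (fun s => Complex.exp ((γ s + 1) / (γ s - 1)))
      (nhdsWithin 1 (Iio 1)) (nhds L) :=
  complement_of_tangent_disk_path_divergence_general r hr0 γ hγc hγ1 hγD hγavoid
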